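/- For every integer x ≥ 1, P(2x−2, 2x) = Σ_{j=0}^{x−1} ((2j+1)!! · (x−1)! · (2x−3)!! · (2x−2j−2) · (2x−1)!) / ((4x−3)!! · j! · (x−j−1)! · (2x−2j−3)!! · (2j+2)!), as an identity in ℚ. -/

import Mathlib

/-- `P I S` is the probability that a fixed clean mobile gets infected in the
Bluetooth malware model with `I` infected and `S` clean mobiles. -/
def P : ℕ → ℕ → ℚ
  | 0, _ => 0
  | _ + 1, 0 => 0
  | I + 1, S + 1 =>
      1 / ((I : ℚ) + S + 1) + ((S : ℚ) / ((I : ℚ) + S + 1)) * P I S +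
        ((I : ℚ) / ((I : ℚ) + S + 1)) * P (I - 1) (S + 1)
  termination_by I _ => I

/-- Double factorial `n‼`; with natural subtraction as argument this also
implements the convention `(-1)‼ = 0‼ = 1`. -/
def dfact : ℕ → ℕ
  | 0 => 1
  | 1 => 1
  | n + 2 => (n + 2) * dfact n

/-!
For `x = n + 1` the left side is `2n / (4n + 1)`: along the recursion one checks
`P I (I + 2k + 2) = I / (2I + 2k + 1)` by strong induction on `I`.
Writing `(2a+1)‼ = (2a+1)! / (2^a a!)`, the `j`-th summand becomes
`(2n)!² (2n+1) / (4n+1)! · C(2n, 2j+1) C(2j+1, j) 2^(2n-2j-1)`, and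
`∑ⱼ C(2n, 2j+1) C(2j+1, j) 2^(2n-2j-1) = C(4n, 2n+1)` by comparing coefficients of `X^(2n+1)` in
`(X + 1)^(4n) = ((X² + 1) + 2X)^(2n)`: only odd powers `(X² + 1)^(2j+1)` contribute.
-/

open Nat Finset Polynomial

lemma P_zero_left (S : ℕ) : P 0 S = 0 := by rw [P]

lemma P_succ_succ (I S : ℕ) :
    P (I + 1) (S + 1) = 1 / ((I : ℚ) + S + 1) + ((S : ℚ) / ((I : ℚ) + S + 1)) * P I S +
      ((I : ℚ) / ((I : ℚ) + S + 1)) * P (I - 1) (S + 1) := by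
  rw [P]

lemma P_add_two_mul_add_two (I k : ℕ) : P I (I + 2 * k + 2) = I / (2 * I + 2 * k + 1) := by
  induction I using Nat.strong_induction_on generalizing k with
  | _ I ih =>
    cases I with
    | zero => simp [P_zero_left]
    | succ I =>
      have hprev : P I (I + 2 * k + 2) = I / (2 * I + 2 * k + 1) := ih I I.lt_succ_self k
      have hprev₂ :
          (I : ℚ) * P (I - 1) (I + 2 * k + 2 + 1) = I * (I - 1) / (2 * I + 2 * k + 1) := by
        cases I with
        | zero => simp
        | succ i =>
          rw [show i + 1 + 2 * k + 2 + 1 = i + 2 * (k + 1) + 2 by ring, Nat.add_sub_cancel,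
            ih i (by omega) (k + 1)]
          push_cast; ring
      rw [show I + 1 + 2 * k + 2 = (I + 2 * k + 2) + 1 by ring, P_succ_succ, hprev,
        div_mul_eq_mul_div (I : ℚ), hprev₂]
      push_cast
      field_simp
      ring

lemma dfact_eq_doubleFactorial (n : ℕ) : dfact n = n‼ := by
  induction n using dfact.induct <;> simp_all [dfact, Nat.doubleFactorial]

lemma cast_dfact_two_mul_add_one (a : ℕ) :
    (dfact (2 * a + 1) : ℚ) = (2 * a + 1)! / (2 ^ a * a !) := by
  rw [eq_div_iff (by positivity), dfact_eq_doubleFactorial, factorial_eq_mul_doubleFactorial,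
    doubleFactorial_two_mul]
  push_cast; ring

def closedFormTerm (x j : ℕ) : ℚ :=
  ((dfact (2 * j + 1) : ℚ) * ((x - 1) ! : ℚ) * (dfact (2 * x - 3) : ℚ) *
      ((2 * x - 2 * j - 2 : ℕ) : ℚ) * ((2 * x - 1) ! : ℚ)) /
    ((dfact (4 * x - 3) : ℚ) * (j ! : ℚ) * ((x - j - 1) ! : ℚ) *
      (dfact (2 * x - 2 * j - 3) : ℚ) * ((2 * j + 2) ! : ℚ))

lemma closedFormTerm_self (n : ℕ) : closedFormTerm (n + 1) n = 0 := by
  rw [closedFormTerm, show 2 * (n + 1) - 2 * n - 2 = 0 by omega, Nat.cast_zero, mul_zero, zero_mul,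
    zero_div]

lemma closedFormTerm_eq (n j : ℕ) (h : j < n) :
    closedFormTerm (n + 1) j = (2 * n)! ^ 2 * (2 * n + 1) / (4 * n + 1)! *
      ((2 * n).choose (2 * j + 1) * (2 * j + 1).choose j * 2 ^ (2 * n - 2 * j - 1) : ℕ) := by
  obtain ⟨m, rfl⟩ : ∃ m, n = j + m + 1 := ⟨n - j - 1, by omega⟩
  rw [closedFormTerm, show 2 * (j + m + 1) - 2 * j - 1 = 2 * m + 1 by omega,
    show 2 * (j + m + 1 + 1) - 3 = 2 * (j + m) + 1 by omega,
    show 4 * (j + m + 1 + 1) - 3 = 2 * (2 * j + 2 * m + 2) + 1 by omega,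
    show 2 * (j + m + 1 + 1) - 2 * j - 3 = 2 * m + 1 by omega,
    show 2 * (j + m + 1 + 1) - 2 * j - 2 = 2 * m + 2 by omega,
    show j + m + 1 + 1 - 1 = j + m + 1 by omega, show j + m + 1 + 1 - j - 1 = m + 1 by omega,
    show 2 * (j + m + 1 + 1) - 1 = 2 * j + 2 * m + 3 by omega,
    show 4 * (j + m + 1) + 1 = 2 * (2 * j + 2 * m + 2) + 1 by omega]
  simp only [cast_dfact_two_mul_add_one]
  push_cast
  rw [Nat.cast_choose ℚ (by omega : 2 * j + 1 ≤ 2 * (j + m + 1)),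
    Nat.cast_choose ℚ (by omega : j ≤ 2 * j + 1),
    show 2 * (j + m + 1) - (2 * j + 1) = 2 * m + 1 by omega, show 2 * j + 1 - j = j + 1 by omega]
  simp only [Nat.factorial_succ, mul_add, mul_one]
  push_cast
  field_simp
  ring

section XSqAddOne

variable {R : Type*} [CommSemiring R]

lemma X_sq_add_one_pow (k : ℕ) : (X ^ 2 + 1 : R[X]) ^ k = expand R 2 ((X + 1) ^ k) := by simp

lemma coeff_X_sq_add_one_pow_two_mul (k i : ℕ) :
    ((X ^ 2 + 1 : R[X]) ^ k).coeff (2 * i) = k.choose i := by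
  rw [X_sq_add_one_pow, coeff_expand_mul' two_pos, coeff_X_add_one_pow]

lemma coeff_X_sq_add_one_pow_two_mul_add_one (k i : ℕ) :
    ((X ^ 2 + 1 : R[X]) ^ k).coeff (2 * i + 1) = 0 := by
  rw [X_sq_add_one_pow, coeff_expand two_pos, if_neg (by omega)]

end XSqAddOne

lemma choose_two_mul_succ_eq_sum (m : ℕ) :
    (2 * m).choose (m + 1) =
      ∑ k ∈ range (m + 1),
        m.choose k * 2 ^ (m - k) * ((X ^ 2 + 1 : ℕ[X]) ^ k).coeff (k + 1) := by
  have hsq : (X + 1 : ℕ[X]) ^ (2 * m) = ((X ^ 2 + 1) + C 2 * X) ^ m := by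
    rw [pow_mul, C_ofNat]; ring
  rw [← Nat.cast_id ((2 * m).choose (m + 1)), ← coeff_X_add_one_pow ℕ, hsq, add_pow,
    finsetSum_coeff]
  refine sum_congr rfl fun k hkm => ?_
  have hk : k ≤ m := Nat.lt_succ_iff.mp (mem_range.mp hkm)
  rw [mul_pow, ← C_pow, ← C_eq_natCast, Nat.cast_id,
    show (X ^ 2 + 1) ^ k * (C (2 ^ (m - k)) * X ^ (m - k)) * C (m.choose k) =
      C (m.choose k * 2 ^ (m - k)) * (X ^ 2 + 1) ^ k * X ^ (m - k) by rw [C_mul]; ring,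
    coeff_mul_X_pow', if_pos (by omega), coeff_C_mul, show m + 1 - (m - k) = k + 1 by omega]

lemma sum_range_two_mul_add_one_eq_sum_odd {M : Type*} [AddCommMonoid M] (f : ℕ → M)
    (hf : ∀ j, f (2 * j) = 0) (n : ℕ) :
    ∑ k ∈ range (2 * n + 1), f k = ∑ j ∈ range n, f (2 * j + 1) := by
  induction n with
  | zero => simpa using hf 0
  | succ n ih =>
    rw [show 2 * (n + 1) + 1 = 2 * n + 1 + 1 + 1 by ring, sum_range_succ, sum_range_succ, ih,
      sum_range_succ, show 2 * n + 1 + 1 = 2 * (n + 1) by ring, hf, add_zero]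

lemma choose_four_mul_eq_sum (n : ℕ) :
    (4 * n).choose (2 * n + 1) =
      ∑ j ∈ range n,
        (2 * n).choose (2 * j + 1) * (2 * j + 1).choose j * 2 ^ (2 * n - 2 * j - 1) := by
  rw [show 4 * n = 2 * (2 * n) by ring, choose_two_mul_succ_eq_sum,
    sum_range_two_mul_add_one_eq_sum_odd _ (fun j => by
      rw [coeff_X_sq_add_one_pow_two_mul_add_one, mul_zero])]
  refine sum_congr rfl fun j _ => ?_
  rw [show 2 * j + 1 + 1 = 2 * (j + 1) by ring, coeff_X_sq_add_one_pow_two_mul, Nat.cast_id,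
    ← Nat.choose_symm_half, show 2 * n - (2 * j + 1) = 2 * n - 2 * j - 1 by omega]
  ring

lemma factorial_sq_mul_choose_four_mul_div (n : ℕ) :
    ((2 * n)! ^ 2 * (2 * n + 1) / (4 * n + 1)! * ((4 * n).choose (2 * n + 1) : ℕ) : ℚ) =
      2 * n / (4 * n + 1) := by
  have hsucc :
      ((4 * n).choose (2 * n + 1) : ℚ) * (2 * n + 1) = (4 * n).choose (2 * n) * (2 * n) := by
    have := Nat.choose_succ_right_eq (4 * n) (2 * n)
    rw [show 4 * n - 2 * n = 2 * n by omega] at this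
    exact_mod_cast this
  calc _ = ((2 * n)! ^ 2 / (4 * n + 1)! : ℚ) *
          (((4 * n).choose (2 * n + 1) : ℚ) * (2 * n + 1)) := by
        ring
    _ = 2 * n / (4 * n + 1) := by
      rw [hsucc, Nat.cast_choose ℚ (by omega : 2 * n ≤ 4 * n), show 4 * n - 2 * n = 2 * n by omega,
        factorial_succ]
      push_cast
      field_simp

open Nat in
theorem stmt_4_general (x : ℕ) :
    P (2 * x - 2) (2 * x) =
      ∑ j ∈ Finset.range x,
        ((dfact (2 * j + 1) : ℚ) * ((x - 1) ! : ℚ) * (dfact (2 * x - 3) : ℚ) *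
            ((2 * x - 2 * j - 2 : ℕ) : ℚ) * ((2 * x - 1) ! : ℚ)) /
          ((dfact (4 * x - 3) : ℚ) * (j ! : ℚ) * ((x - j - 1) ! : ℚ) *
            (dfact (2 * x - 2 * j - 3) : ℚ) * ((2 * j + 2) ! : ℚ)) := by
  cases x with
  | zero => simp [P_zero_left]
  | succ n =>
    change _ = ∑ j ∈ range (n + 1), closedFormTerm (n + 1) j
    rw [sum_range_succ, closedFormTerm_self, add_zero,
      sum_congr rfl fun j hj => closedFormTerm_eq n j (mem_range.mp hj), ← mul_sum, ← Nat.cast_sum,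
      ← choose_four_mul_eq_sum, factorial_sq_mul_choose_four_mul_div,
      show 2 * (n + 1) - 2 = 2 * n by omega]
    convert P_add_two_mul_add_two (2 * n) 0 using 2 <;> push_cast <;> ring

open Nat in
/-- Closed form for `P (2x-2) (2x)`. -/
theorem stmt_4 (x : ℕ) (hx : 1 ≤ x) :
    P (2 * x - 2) (2 * x) =
      ∑ j ∈ Finset.range x,
        ((dfact (2 * j + 1) : ℚ) * ((x - 1) ! : ℚ) * (dfact (2 * x - 3) : ℚ) *
            ((2 * x - 2 * j - 2 : ℕ) : ℚ) * ((2 * x - 1) ! : ℚ)) /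
          ((dfact (4 * x - 3) : ℚ) * (j ! : ℚ) * ((x - j - 1) ! : ℚ) *
            (dfact (2 * x - 2 * j - 3) : ℚ) * ((2 * j + 2) ! : ℚ)) :=
  stmt_4_general x
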